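/- Under the asymptotic framework with p_m → 0, let α_m ∈ (0,1) with lim sup α_m < 1, and let ω_{GW,m} > 0 be a solution of the Genovese–Wasserman equation (1 − D(ω)) / [(1−p_m)(1 − D(ω)) + p_m(1 − D(ω·(1+u_m)^(−1/2)))] = α_m. Then the procedure that rejects the i-th null when X_i²/σ_0² ≥ ω_{GW,m}² is asymptotically Bayes optimal under sparsity, i.e., ω_{GW,m}²/(C·(v_m/C_0)^(2/γ)) → 1, if and only if δ_m·r_{α_m} → C_1/(1 − C_2), where r_α = α/(1−α); and in that case ω_{GW,m}²/(C_B·(f_m/r_{α_m})^(2/γ)) → 1, where C_B = [(C_d/γ)/(1 − D(√C))]^(2/γ). -/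

import Mathlib

/-!
Write `A = 1 - D ω`, `B = 1 - D t` with `t = ω (1 + u)^(-1/2)`. The Genovese–Wasserman equation
says `r_α (B - A) = A / p`, hence `δ r_α (1 - p) t^γ (B - A) = v (1 + u)^(-γ/2) · ω^γ A`. Since
`A (1 - α) ≤ p`, `A → 0` and `ω → ∞`, so the tail asymptotics `ω^γ A → C_d / γ` make the right side
tend to `C₀ C_d / γ`.

By the MLR property `x^(γ+1) d x` increases strictly to `C_d`; writing
`H x = x^γ (1 - D x) = ∫_{y > 1} (x y)^(γ+1) d (x y) y^(-γ-1) dy`, `H` is continuous and strictly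
increasing. ABOS is equivalent to `t → √C`, and since `t^γ A → 0`, the limit above shows that this
holds iff `δ r_α → C₀ (C_d / γ) / H √C = C₁ / (1 - C₂)`.
-/

open MeasureTheory Filter

noncomputable def cdf (d : ℝ → ℝ) (x : ℝ) : ℝ := ∫ t in Set.Iic x, d t

/-- Monotone polynomial tail (MPT) density with tail index `γ` and tail constant `Cd`. -/
structure IsMPT (d : ℝ → ℝ) (γ Cd : ℝ) : Prop where
  gamma_pos : 0 < γ
  Cd_pos : 0 < Cd
  nonneg : ∀ x, 0 ≤ d x
  integrable : Integrable d
  integral_one : ∫ x, d x = 1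
  even_or_halfline : (∀ x, d (-x) = d x) ∨ (∀ x < 0, d x = 0)
  pos : ∀ x, 0 < x → 0 < d x
  tail : Tendsto (fun x => d x * x ^ (γ + 1)) atTop (nhds Cd)
  mlr : ∀ θ : ℝ, 1 < θ → StrictMonoOn (fun x => d (x / θ) / d x) (Set.Ioi 0)

open Set Real Topology

theorem StrictMonoOn.lt_of_tendsto_atTop {α β : Type*} [LinearOrder α] [NoMaxOrder α]
    [LinearOrder β] [TopologicalSpace β] [OrderClosedTopology β] {f : α → β} {a x : α} {L : β}
    (hf : StrictMonoOn f (Ioi a)) (hL : Tendsto f atTop (𝓝 L)) (hx : a < x) : f x < L := by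
  have : Nonempty α := ⟨x⟩
  obtain ⟨y, hxy⟩ := exists_gt x
  refine (hf hx (hx.trans hxy) hxy).trans_le (ge_of_tendsto hL ?_)
  filter_upwards [eventually_ge_atTop y] with z hz
  exact hf.monotoneOn (hx.trans hxy) (hx.trans_le (hxy.le.trans hz)) hz

theorem StrictMonoOn.tendsto_of_tendsto_apply {α β ι : Type*} [LinearOrder α] [TopologicalSpace α]
    [OrderTopology α] [DenselyOrdered α] [LinearOrder β] [TopologicalSpace β] [OrderTopology β]
    {f : α → β} {s : Set α} {c : α} {l : Filter ι} {t : ι → α} (hf : StrictMonoOn f s)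
    (hs : s ∈ 𝓝 c) (hts : ∀ᶠ i in l, t i ∈ s) (hft : Tendsto (fun i => f (t i)) l (𝓝 (f c))) :
    Tendsto t l (𝓝 c) := by
  have hc : c ∈ s := mem_of_mem_nhds hs
  refine tendsto_order.2 ⟨fun a ha => ?_, fun b hb => ?_⟩
  · obtain ⟨a', ha', hsub⟩ := exists_Ioc_subset_of_mem_nhds hs ⟨a, ha⟩
    obtain ⟨a'', ha''⟩ := exists_between (max_lt ha ha')
    have ha''s : a'' ∈ s := hsub ⟨(le_max_right _ _).trans_lt ha''.1, ha''.2.le⟩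
    filter_upwards [hts, (tendsto_order.1 hft).1 _ (hf ha''s hc ha''.2)] with i hi hfi
    exact (le_max_left _ _).trans_lt (ha''.1.trans ((hf.lt_iff_lt ha''s hi).1 hfi))
  · obtain ⟨b', hb', hsub⟩ := exists_Ico_subset_of_mem_nhds hs ⟨b, hb⟩
    obtain ⟨b'', hb''⟩ := exists_between (lt_min hb hb')
    have hb''s : b'' ∈ s := hsub ⟨hb''.1.le, hb''.2.trans_le (min_le_right _ _)⟩
    filter_upwards [hts, (tendsto_order.1 hft).2 _ (hf hc hb''s hb''.1)] with i hi hfi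
    exact ((hf.lt_iff_lt hi hb''s).1 hfi).trans (hb''.2.trans_le (min_le_left _ _))

theorem setIntegral_pos_of_forall_pos {X : Type*} [MeasurableSpace X] {μ : Measure X}
    {f : X → ℝ} {s : Set X} (hs : MeasurableSet s) (hμs : μ s ≠ 0) (hf : IntegrableOn f s μ)
    (hpos : ∀ x ∈ s, 0 < f x) : 0 < ∫ x in s, f x ∂μ := by
  rw [setIntegral_pos_iff_support_of_nonneg_ae
    ((ae_restrict_iff' hs).2 (ae_of_all _ fun x hx => (hpos x hx).le)) hf,
    inter_eq_right.2 fun x hx => Function.mem_support.2 (hpos x hx).ne']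
  exact pos_iff_ne_zero.2 hμs

section Asymptotics

variable {ι : Type*} {l : Filter ι}

theorem tendsto_zero_of_mul_one_sub_le {A p α : ι → ℝ} (hA : ∀ i, 0 ≤ A i)
    (hαb : IsBoundedUnder (· ≤ ·) l α) (hα : limsup α l < 1) (hp : Tendsto p l (𝓝 0))
    (hle : ∀ i, A i * (1 - α i) ≤ p i) : Tendsto A l (𝓝 0) := by
  obtain ⟨c, hαc, hc⟩ := exists_between hα
  have hpc : Tendsto (fun i => p i / (1 - c)) l (𝓝 0) := by simpa using hp.div_const (1 - c)
  refine tendsto_of_tendsto_of_tendsto_of_le_of_le' tendsto_const_nhds hpc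
    (Eventually.of_forall hA) ?_
  filter_upwards [eventually_lt_of_limsup_lt hαc hαb] with i hi
  rw [le_div_iff₀ (sub_pos.2 hc)]
  nlinarith [hA i, hle i]

theorem tendsto_mul_one_add_rpow_neg {u v : ι → ℝ} {q c : ℝ} (hu : ∀ i, 0 < u i)
    (hu' : Tendsto u l atTop) (h : Tendsto (fun i => v i * u i ^ (-q)) l (𝓝 c)) :
    Tendsto (fun i => v i * (1 + u i) ^ (-q)) l (𝓝 c) := by
  have hratio : Tendsto (fun i => (1 + (u i)⁻¹) ^ (-q)) l (𝓝 1) := by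
    simpa using ((tendsto_inv_atTop_zero.comp hu').const_add 1).rpow_const
      (Or.inl (by norm_num : (1 : ℝ) + 0 ≠ 0))
  refine (by simpa using h.mul hratio : Tendsto _ l (𝓝 c)).congr fun i => ?_
  have := hu i
  rw [mul_assoc, ← mul_rpow this.le (by positivity), mul_add, mul_one, mul_inv_cancel₀ this.ne',
    add_comm]

theorem tendsto_rpow_div_of_tendsto_mul_rpow_neg {v w : ι → ℝ} {q c : ℝ} (hq : q ≠ 0)
    (hc : 0 < c) (hv : ∀ i, 0 < v i) (hw : ∀ i, 0 < w i)
    (h : Tendsto (fun i => v i * w i ^ (-q)) l (𝓝 c)) :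
    Tendsto (fun i => (v i / c) ^ q⁻¹ / w i) l (𝓝 1) := by
  have h1 : Tendsto (fun i => v i * w i ^ (-q) / c) l (𝓝 1) := by
    simpa [hc.ne'] using h.div_const c
  have h2 := h1.rpow_const (p := q⁻¹) (Or.inl one_ne_zero)
  rw [one_rpow] at h2
  refine h2.congr fun i => ?_
  have := hv i
  have := hw i
  rw [mul_div_right_comm, mul_rpow (by positivity) (by positivity), ← rpow_mul (hw i).le,
    neg_mul, mul_inv_cancel₀ hq, rpow_neg_one, ← div_eq_mul_inv]

theorem tendsto_sq_div_rpow_iff {ω v w : ι → ℝ} {C c γ : ℝ} (hC : 0 < C) (hc : 0 < c)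
    (hγ : γ ≠ 0) (hω : ∀ i, 0 ≤ ω i) (hv : ∀ i, 0 < v i) (hw : ∀ i, 0 < w i)
    (hvw : Tendsto (fun i => v i * w i ^ (-(γ / 2))) l (𝓝 c)) :
    Tendsto (fun i => ω i ^ 2 / (C * (v i / c) ^ (2 / γ))) l (𝓝 1) ↔
      Tendsto (fun i => ω i * w i ^ (-(1 : ℝ) / 2)) l (𝓝 √C) := by
  have hwW : Tendsto (fun i => w i / (v i / c) ^ (2 / γ)) l (𝓝 1) := by
    have := (tendsto_rpow_div_of_tendsto_mul_rpow_neg (div_ne_zero hγ two_ne_zero) hc hv hw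
      hvw).inv₀ one_ne_zero
    simpa only [inv_div, inv_one] using this
  have hsplit : ∀ i, ω i ^ 2 / (C * (v i / c) ^ (2 / γ))
      = (ω i * w i ^ (-(1 : ℝ) / 2)) ^ 2 / C * (w i / (v i / c) ^ (2 / γ)) := fun i => by
    have hw2 : (w i ^ (-(1 : ℝ) / 2)) ^ 2 * w i = 1 := by
      rw [← rpow_natCast, ← rpow_mul (hw i).le, ← rpow_add_one (hw i).ne']
      norm_num
    rw [div_mul_div_comm, mul_pow, mul_assoc, hw2, mul_one]
  have hcancel := Filter.tendsto_mul_iff_of_ne_zero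
    (f := fun i => (ω i * w i ^ (-(1 : ℝ) / 2)) ^ 2 / C) (x := 1) hwW one_ne_zero
  rw [mul_one] at hcancel
  simp only [hsplit, hcancel]
  constructor
  · intro h
    refine (by simpa using (h.const_mul C).sqrt : Tendsto _ l (𝓝 √C)).congr fun i => ?_
    rw [mul_div_cancel₀ _ hC.ne',
      Real.sqrt_sq (mul_nonneg (hω i) (rpow_nonneg (hw i).le _))]
  · intro h
    simpa [Real.sq_sqrt hC.le, hC.ne'] using (h.pow 2).div_const C

theorem StrictMonoOn.tendsto_iff_of_tendsto_mul {H : ℝ → ℝ} {s : Set ℝ} {c K : ℝ}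
    (hH : StrictMonoOn H s) (hs : s ∈ 𝓝 c) (hHc : ContinuousAt H c) (hc : H c ≠ 0) (hK : K ≠ 0)
    {t X E : ι → ℝ} (hts : ∀ᶠ i in l, t i ∈ s) (hE : Tendsto E l (𝓝 0))
    (hX : Tendsto (fun i => X i * (H (t i) - E i)) l (𝓝 K)) :
    Tendsto t l (𝓝 c) ↔ Tendsto X l (𝓝 (K / H c)) := by
  constructor
  · intro ht
    have hY : Tendsto (fun i => H (t i) - E i) l (𝓝 (H c)) := by
      simpa using (hHc.tendsto.comp ht).sub hE
    rwa [← Filter.tendsto_mul_iff_of_ne_zero hY hc, div_mul_cancel₀ K hc]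
  · intro hXc
    have hY : Tendsto (fun i => H (t i) - E i) l (𝓝 (H c)) := by
      rw [← Filter.tendsto_mul_iff_of_ne_zero hXc (div_ne_zero hK hc), mul_div_cancel₀ K hc]
      simpa only [mul_comm] using hX
    exact hH.tendsto_of_tendsto_apply hs hts (by simpa using hY.add hE)

theorem tendsto_div_mul_rpow_of_tendsto {ω v x y : ι → ℝ} {C C0 CB L q : ℝ} (hC : C ≠ 0)
    (hC0 : 0 < C0) (hL : 0 < L) (hCB : C * (L / C0) ^ q = CB) (hx : ∀ i, 0 < x i)
    (hy : ∀ i, 0 ≤ y i) (hv : ∀ i, v i = x i * y i) (hxL : Tendsto x l (𝓝 L))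
    (h : Tendsto (fun i => ω i / (C * (v i / C0) ^ q)) l (𝓝 1)) :
    Tendsto (fun i => ω i / (CB * y i ^ q)) l (𝓝 1) := by
  have hCB0 : CB ≠ 0 := hCB ▸ mul_ne_zero hC (rpow_pos_of_pos (div_pos hL hC0) q).ne'
  have hfactor : Tendsto (fun i => C * (x i / C0) ^ q / CB) l (𝓝 1) := by
    have := (((hxL.div_const C0).rpow_const (p := q) (Or.inl (div_pos hL hC0).ne')).const_mul
      C).div_const CB
    rwa [hCB, div_self hCB0] at this
  have hlim := h.mul hfactor
  rw [mul_one] at hlim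
  refine hlim.congr fun i => ?_
  have hxC0 : 0 < (x i / C0) ^ q := rpow_pos_of_pos (div_pos (hx i) hC0) q
  rw [hv, mul_div_right_comm, mul_rpow (div_pos (hx i) hC0).le (hy i)]
  field_simp

end Asymptotics

theorem mul_one_sub_eq_of_div_eq {A B p α : ℝ} (hden : (1 - p) * A + p * B ≠ 0)
    (h : A / ((1 - p) * A + p * B) = α) : A * (1 - α) = α * p * (B - A) := by
  rw [div_eq_iff hden] at h
  linear_combination h

theorem odds_mul_sub_eq_of_div_eq {A B p α : ℝ} (hA : 0 < A) (hB : 0 < B) (hp : p ∈ Ioo 0 1)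
    (hα : α ≠ 1) (h : A / ((1 - p) * A + p * B) = α) : α / (1 - α) * (B - A) = A / p := by
  have hgw := mul_one_sub_eq_of_div_eq
    (add_pos (mul_pos (sub_pos.2 hp.2) hA) (mul_pos hp.1 hB)).ne' h
  rw [div_mul_eq_mul_div, div_eq_div_iff (sub_ne_zero.2 (Ne.symm hα)) hp.1.ne']
  linear_combination hgw.symm

namespace IsMPT

variable {d : ℝ → ℝ} {γ Cd : ℝ} {ι : Type*} {l : Filter ι}

theorem strictMonoOn_mul_rpow (h : IsMPT d γ Cd) :
    StrictMonoOn (fun x => d x * x ^ (γ + 1)) (Ioi 0) := by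
  intro a (ha : 0 < a) b (hb : 0 < b) hab
  set θ := b / a with hθ_def
  have hθ : 1 < θ := (one_lt_div ha).2 hab
  have hθ0 : 0 < θ := one_pos.trans hθ
  have hθa : b / θ = a := by rw [hθ_def, div_div_cancel₀ hb.ne']
  -- `d (x / θ) / d x` increases strictly to `θ ^ (γ + 1)`, so it is below that limit at `x = b`
  have hlim : Tendsto (fun x => d (x / θ) / d x) atTop (𝓝 (θ ^ (γ + 1))) := by
    have := ((h.tail.comp (tendsto_id.atTop_div_const hθ0)).div h.tail h.Cd_pos.ne').mul_const
      (θ ^ (γ + 1))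
    rw [div_self h.Cd_pos.ne', one_mul] at this
    refine this.congr' ?_
    filter_upwards [eventually_gt_atTop 0] with x hx
    have := h.pos x hx
    simp only [Pi.div_apply, Function.comp_apply, id, div_rpow hx.le hθ0.le]
    field_simp
  have hratio : d a / d b < θ ^ (γ + 1) := by
    simpa only [hθa] using (h.mlr θ hθ).lt_of_tendsto_atTop hlim hb
  have hb_pow : b ^ (γ + 1) = θ ^ (γ + 1) * a ^ (γ + 1) := by
    rw [← mul_rpow hθ0.le ha.le, hθ_def, div_mul_cancel₀ b ha.ne']
  rw [div_lt_iff₀ (h.pos b hb)] at hratio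
  calc d a * a ^ (γ + 1) < θ ^ (γ + 1) * d b * a ^ (γ + 1) :=
        mul_lt_mul_of_pos_right hratio (rpow_pos_of_pos ha _)
    _ = d b * b ^ (γ + 1) := by rw [hb_pow]; ring

theorem mul_rpow_lt (h : IsMPT d γ Cd) {x : ℝ} (hx : 0 < x) : d x * x ^ (γ + 1) < Cd :=
  h.strictMonoOn_mul_rpow.lt_of_tendsto_atTop h.tail hx

theorem one_sub_cdf_eq (h : IsMPT d γ Cd) (x : ℝ) : 1 - cdf d x = ∫ t in Ioi x, d t := by
  rw [← h.integral_one, cdf, ← intervalIntegral.integral_Iic_add_Ioi h.integrable.integrableOn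
    h.integrable.integrableOn, add_sub_cancel_left]

theorem one_sub_cdf_pos (h : IsMPT d γ Cd) (x : ℝ) : 0 < 1 - cdf d x := by
  rw [h.one_sub_cdf_eq]
  refine (setIntegral_pos_of_forall_pos measurableSet_Ioi (by simp) h.integrable.integrableOn
    fun t (ht : max x 0 < t) => h.pos t ((le_max_right _ _).trans_lt ht)).trans_le ?_
  exact setIntegral_mono_set h.integrable.integrableOn (ae_of_all _ h.nonneg)
    (Ioi_subset_Ioi (le_max_left x 0)).eventuallyLE

theorem cdf_nonneg (h : IsMPT d γ Cd) (x : ℝ) : 0 ≤ cdf d x :=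
  setIntegral_nonneg measurableSet_Iic fun t _ => h.nonneg t

theorem monotone_cdf (h : IsMPT d γ Cd) : Monotone (cdf d) := fun _ _ hab =>
  setIntegral_mono_set h.integrable.integrableOn (ae_of_all _ h.nonneg)
    (Iic_subset_Iic.2 hab).eventuallyLE

theorem continuous_cdf (h : IsMPT d γ Cd) : Continuous (cdf d) := by
  have hprim : cdf d = fun x => cdf d 0 + ∫ t in (0 : ℝ)..x, d t := by
    funext x
    rw [← intervalIntegral.integral_Iic_sub_Iic h.integrable.integrableOn
      h.integrable.integrableOn, cdf, cdf, add_sub_cancel]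
  rw [hprim]
  exact continuous_const.add
    (intervalIntegral.continuous_primitive (fun _ _ => h.integrable.intervalIntegrable) 0)

theorem tendsto_atTop_of_tendsto_one_sub_cdf (h : IsMPT d γ Cd) {ω : ι → ℝ}
    (hω : Tendsto (fun i => 1 - cdf d (ω i)) l (𝓝 0)) : Tendsto ω l atTop :=
  tendsto_atTop.2 fun M => (hω.eventually_lt_const (h.one_sub_cdf_pos M)).mono fun _ hi =>
    (h.monotone_cdf.reflect_lt (by linarith)).le

theorem norm_mul_rpow_mul_rpow_neg_le (h : IsMPT d γ Cd) {x y : ℝ} (hx : 0 < x) (hy : 0 < y) :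
    ‖d (x * y) * (x * y) ^ (γ + 1) * y ^ (-(γ + 1))‖ ≤ Cd * y ^ (-(γ + 1)) := by
  have hxy := mul_pos hx hy
  rw [Real.norm_of_nonneg (by have := h.nonneg (x * y); positivity)]
  exact mul_le_mul_of_nonneg_right (h.mul_rpow_lt hxy).le (by positivity)

theorem integrableOn_mul_rpow_mul_rpow_neg (h : IsMPT d γ Cd) {x : ℝ} (hx : 0 < x) :
    IntegrableOn (fun y => d (x * y) * (x * y) ^ (γ + 1) * y ^ (-(γ + 1))) (Ioi 1) := by
  refine Integrable.mono'
    ((integrableOn_Ioi_rpow_of_lt (a := -(γ + 1)) (by linarith [h.gamma_pos]) one_pos).const_mul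
      Cd)
    ?_ ((ae_restrict_iff' measurableSet_Ioi).2 (ae_of_all _ fun y (hy : 1 < y) =>
      h.norm_mul_rpow_mul_rpow_neg_le hx (one_pos.trans hy)))
  exact (((h.integrable.comp_mul_left' hx.ne').aestronglyMeasurable.mul
    (by fun_prop : Measurable fun y : ℝ => (x * y) ^ (γ + 1)).aestronglyMeasurable).mul
    (by fun_prop : Measurable fun y : ℝ => y ^ (-(γ + 1))).aestronglyMeasurable).restrict

theorem rpow_mul_one_sub_cdf_eq (h : IsMPT d γ Cd) {x : ℝ} (hx : 0 < x) :
    x ^ γ * (1 - cdf d x) = ∫ y in Ioi 1, d (x * y) * (x * y) ^ (γ + 1) * y ^ (-(γ + 1)) := by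
  have hsub : ∫ t in Ioi x, d t = x * ∫ y in Ioi 1, d (x * y) := by
    simpa using (integral_comp_mul_left_Ioi' d 1 hx).symm
  rw [h.one_sub_cdf_eq, hsub, ← mul_assoc, ← integral_const_mul]
  refine setIntegral_congr_fun measurableSet_Ioi fun y (hy : 1 < y) => ?_
  have hy0 : 0 < y := one_pos.trans hy
  rw [mul_rpow hx.le hy0.le, rpow_neg hy0.le, rpow_add hx, rpow_one]
  field_simp

theorem strictMonoOn_rpow_mul_one_sub_cdf (h : IsMPT d γ Cd) :
    StrictMonoOn (fun x => x ^ γ * (1 - cdf d x)) (Ioi 0) := by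
  intro a (ha : 0 < a) b (hb : 0 < b) hab
  simp only
  rw [h.rpow_mul_one_sub_cdf_eq ha, h.rpow_mul_one_sub_cdf_eq hb, ← sub_pos,
    ← integral_sub (h.integrableOn_mul_rpow_mul_rpow_neg hb)
      (h.integrableOn_mul_rpow_mul_rpow_neg ha)]
  refine setIntegral_pos_of_forall_pos measurableSet_Ioi (by simp)
    ((h.integrableOn_mul_rpow_mul_rpow_neg hb).sub (h.integrableOn_mul_rpow_mul_rpow_neg ha))
    fun y (hy : 1 < y) => sub_pos.2 ?_
  have hy0 : 0 < y := one_pos.trans hy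
  exact mul_lt_mul_of_pos_right (h.strictMonoOn_mul_rpow (mul_pos ha hy0) (mul_pos hb hy0)
    (mul_lt_mul_of_pos_right hab hy0)) (rpow_pos_of_pos hy0 _)

theorem tendsto_rpow_mul_one_sub_cdf (h : IsMPT d γ Cd) :
    Tendsto (fun x => x ^ γ * (1 - cdf d x)) atTop (𝓝 (Cd / γ)) := by
  have hγ := h.gamma_pos
  have hlim : ∫ y in Ioi (1 : ℝ), Cd * y ^ (-(γ + 1)) = Cd / γ := by
    rw [integral_const_mul, integral_Ioi_rpow_of_lt (by linarith) one_pos]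
    simp [div_eq_mul_inv]
  rw [← hlim]
  refine (tendsto_integral_filter_of_dominated_convergence (μ := volume.restrict (Ioi 1))
    (F := fun x y => d (x * y) * (x * y) ^ (γ + 1) * y ^ (-(γ + 1)))
    (fun y => Cd * y ^ (-(γ + 1))) ?_ ?_ ?_ ?_).congr' ?_
  · filter_upwards [eventually_gt_atTop 0] with x hx
    exact (h.integrableOn_mul_rpow_mul_rpow_neg hx).aestronglyMeasurable
  · filter_upwards [eventually_gt_atTop 0] with x hx
    exact (ae_restrict_iff' measurableSet_Ioi).2 (ae_of_all _ fun y (hy : 1 < y) =>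
      h.norm_mul_rpow_mul_rpow_neg_le hx (one_pos.trans hy))
  · exact (integrableOn_Ioi_rpow_of_lt (by linarith) one_pos).const_mul Cd
  · refine (ae_restrict_iff' measurableSet_Ioi).2 (ae_of_all _ fun y (hy : 1 < y) => ?_)
    exact (h.tail.comp (tendsto_id.atTop_mul_const (one_pos.trans hy))).mul_const _
  · filter_upwards [eventually_gt_atTop 0] with x hx
    exact (h.rpow_mul_one_sub_cdf_eq hx).symm

theorem tendsto_rpow_mul_one_sub_cdf_of_gw (h : IsMPT d γ Cd) {p α ω t : ι → ℝ}
    (hp : ∀ i, p i ∈ Ioo 0 1) (hp0 : Tendsto p l (𝓝 0)) (hα : ∀ i, α i ∈ Ioo 0 1)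
    (hαsup : limsup α l < 1)
    (heq : ∀ i, (1 - cdf d (ω i)) / ((1 - p i) * (1 - cdf d (ω i)) + p i * (1 - cdf d (t i)))
      = α i) :
    Tendsto (fun i => ω i ^ γ * (1 - cdf d (ω i))) l (𝓝 (Cd / γ)) := by
  refine h.tendsto_rpow_mul_one_sub_cdf.comp (h.tendsto_atTop_of_tendsto_one_sub_cdf
    (tendsto_zero_of_mul_one_sub_le (fun i => (h.one_sub_cdf_pos _).le)
      (isBoundedUnder_of ⟨1, fun i => (hα i).2.le⟩) hαsup hp0 fun i => ?_))
  have hBA : 1 - cdf d (t i) - (1 - cdf d (ω i)) ≤ 1 := by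
    linarith [h.cdf_nonneg (t i), h.one_sub_cdf_pos (ω i)]
  rw [mul_one_sub_eq_of_div_eq (add_pos (mul_pos (sub_pos.2 (hp i).2) (h.one_sub_cdf_pos _))
    (mul_pos (hp i).1 (h.one_sub_cdf_pos _))).ne' (heq i)]
  calc α i * p i * (1 - cdf d (t i) - (1 - cdf d (ω i))) ≤ α i * p i * 1 :=
        mul_le_mul_of_nonneg_left hBA (mul_pos (hα i).1 (hp i).1).le
    _ ≤ p i := by nlinarith [(hα i).2, (hp i).1]

theorem tendsto_iff_of_tendsto_mul_rpow_mul_one_sub_cdf (h : IsMPT d γ Cd) {c K : ℝ}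
    (hc : 0 < c) (hK : K ≠ 0) {t X E : ι → ℝ} (ht : ∀ i, 0 < t i) (hE : Tendsto E l (𝓝 0))
    (hX : Tendsto (fun i => X i * (t i ^ γ * (1 - cdf d (t i)) - E i)) l (𝓝 K)) :
    Tendsto t l (𝓝 c) ↔ Tendsto X l (𝓝 (K / (c ^ γ * (1 - cdf d c)))) :=
  h.strictMonoOn_rpow_mul_one_sub_cdf.tendsto_iff_of_tendsto_mul (Ioi_mem_nhds hc)
    ((continuousAt_id.rpow_const (Or.inl hc.ne')).mul
      (continuous_const.sub h.continuous_cdf).continuousAt)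
    (mul_pos (rpow_pos_of_pos hc γ) (h.one_sub_cdf_pos c)).ne' hK (Eventually.of_forall ht) hE hX

end IsMPT

theorem C₀_mul_div_eq_C₁_div_one_sub_C₂ {C γ Cd y D : ℝ} (hC : 0 < C) (hCd : Cd ≠ 0)
    (hD : D ≠ 1) :
    C ^ ((γ + 1) / 2) * y / Cd * (Cd / γ) / (√C ^ γ * (1 - D))
      = 2 * √C * y / γ / (1 - (2 * D - 1)) := by
  have hsqrt : C ^ ((γ + 1) / 2) = √C ^ γ * √C := by
    rw [sqrt_eq_rpow, ← rpow_mul hC.le, ← rpow_add hC]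
    ring_nf
  have hD' : 1 - D ≠ 0 := sub_ne_zero.2 (Ne.symm hD)
  have : 0 < √C ^ γ := rpow_pos_of_pos (sqrt_pos.2 hC) γ
  rw [hsqrt, show 1 - (2 * D - 1) = 2 * (1 - D) by ring]
  field_simp

theorem C_mul_rpow_eq_C_B {C γ Cd y D : ℝ} (hC : 0 < C) (hγ : 0 < γ) (hCd : 0 < Cd)
    (hy : y ≠ 0) (hD : D < 1) :
    C * ((2 * √C * y / γ / (1 - (2 * D - 1))) / (C ^ ((γ + 1) / 2) * y / Cd)) ^ (2 / γ)
      = ((Cd / γ) / (1 - D)) ^ (2 / γ) := by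
  have hs : 0 < √C ^ γ := rpow_pos_of_pos (sqrt_pos.2 hC) γ
  have hC0 : C ^ ((γ + 1) / 2) * y / Cd ≠ 0 := by
    have := rpow_pos_of_pos hC ((γ + 1) / 2)
    positivity
  have hratio : (2 * √C * y / γ / (1 - (2 * D - 1))) / (C ^ ((γ + 1) / 2) * y / Cd)
      = (Cd / γ) / (1 - D) / √C ^ γ := by
    rw [← C₀_mul_div_eq_C₁_div_one_sub_C₂ hC hCd.ne' hD.ne]
    field_simp
  have hpow : (√C ^ γ) ^ (2 / γ) = C := by
    rw [← rpow_mul (sqrt_nonneg C), mul_div_cancel₀ 2 hγ.ne', rpow_two, sq_sqrt hC.le]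
  rw [hratio, div_rpow (by have := sub_pos.2 hD; positivity) hs.le, hpow]
  field_simp

theorem GW_procedure_ABOS_general (d : ℝ → ℝ) (γ Cd : ℝ) (h : IsMPT d γ Cd)
    (C : ℝ) (hC : 0 < C)
    (p : ℕ → ℝ) (hp : ∀ m, p m ∈ Set.Ioo (0 : ℝ) 1) (hp0 : Tendsto p atTop (nhds 0))
    (u : ℕ → ℝ) (hu : ∀ m, 0 < u m) (hu' : Tendsto u atTop atTop)
    (δ : ℕ → ℝ) (hδ : ∀ m, 0 < δ m)
    (f v : ℕ → ℝ) (hf : ∀ m, f m = (1 - p m) / p m) (hv : ∀ m, v m = δ m * f m)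
    (hvu : Tendsto (fun m => v m * u m ^ (-(γ / 2))) atTop
      (nhds (C ^ ((γ + 1) / 2) * d (Real.sqrt C) / Cd)))
    (α : ℕ → ℝ) (hα : ∀ m, α m ∈ Set.Ioo (0 : ℝ) 1) (hαsup : limsup α atTop < 1)
    (ωGW : ℕ → ℝ) (hωGW : ∀ m, 0 < ωGW m)
    (hωGWeq : ∀ m, (1 - cdf d (ωGW m)) /
        ((1 - p m) * (1 - cdf d (ωGW m))
          + p m * (1 - cdf d (ωGW m * (1 + u m) ^ (-(1 : ℝ) / 2))))
      = α m) :
    (Tendsto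
      (fun m => ωGW m ^ 2 / (C * (v m / (C ^ ((γ + 1) / 2) * d (Real.sqrt C) / Cd)) ^ (2 / γ)))
      atTop (nhds 1) ↔
    Tendsto (fun m => δ m * (α m / (1 - α m))) atTop
      (nhds ((2 * Real.sqrt C * d (Real.sqrt C) / γ)
        / (1 - (2 * cdf d (Real.sqrt C) - 1))))) ∧
    (Tendsto (fun m => δ m * (α m / (1 - α m))) atTop
      (nhds ((2 * Real.sqrt C * d (Real.sqrt C) / γ)
        / (1 - (2 * cdf d (Real.sqrt C) - 1)))) →
      Tendsto
        (fun m => ωGW m ^ 2 /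
          (((Cd / γ) / (1 - cdf d (Real.sqrt C))) ^ (2 / γ)
            * (f m / (α m / (1 - α m))) ^ (2 / γ)))
        atTop (nhds 1)) := by
  have hγ := h.gamma_pos
  have hCd := h.Cd_pos
  have hsC : 0 < √C := sqrt_pos.2 hC
  have hDC : 0 < 1 - cdf d √C := h.one_sub_cdf_pos √C
  have hC0 : 0 < C ^ ((γ + 1) / 2) * d √C / Cd := by
    have := rpow_pos_of_pos hC ((γ + 1) / 2); have := h.pos _ hsC; positivity
  have hu1 : ∀ m, 0 < 1 + u m := fun m => by linarith [hu m]
  have hr : ∀ m, 0 < α m / (1 - α m) := fun m => div_pos (hα m).1 (sub_pos.2 (hα m).2)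
  have hf0 : ∀ m, 0 < f m := fun m => hf m ▸ div_pos (sub_pos.2 (hp m).2) (hp m).1
  set t : ℕ → ℝ := fun m => ωGW m * (1 + u m) ^ (-(1 : ℝ) / 2) with ht_def
  have htγ : ∀ m, t m ^ γ = ωGW m ^ γ * (1 + u m) ^ (-(γ / 2)) := fun m => by
    rw [ht_def, mul_rpow (hωGW m).le (rpow_nonneg (hu1 m).le _), ← rpow_mul (hu1 m).le]
    ring_nf
  have hωA := h.tendsto_rpow_mul_one_sub_cdf_of_gw hp hp0 hα hαsup hωGWeq
  have hvu1 := tendsto_mul_one_add_rpow_neg hu hu' hvu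
  have hX : Tendsto (fun m => δ m * (α m / (1 - α m)) * (1 - p m)
      * (t m ^ γ * (1 - cdf d (t m)) - t m ^ γ * (1 - cdf d (ωGW m)))) atTop
      (𝓝 (C ^ ((γ + 1) / 2) * d √C / Cd * (Cd / γ))) := (hvu1.mul hωA).congr fun m => by
    have hodds := odds_mul_sub_eq_of_div_eq (h.one_sub_cdf_pos _) (h.one_sub_cdf_pos _) (hp m)
      (hα m).2.ne (hωGWeq m)
    rw [← mul_sub, htγ, hv, hf]
    linear_combination (-(δ m * (1 - p m) * ωGW m ^ γ * (1 + u m) ^ (-(γ / 2)))) * hodds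
  have htA : Tendsto (fun m => t m ^ γ * (1 - cdf d (ωGW m))) atTop (𝓝 0) := by
    have := ((tendsto_rpow_neg_atTop (by positivity : 0 < γ / 2)).comp
      (tendsto_atTop_add_const_left _ 1 hu')).mul hωA
    rw [zero_mul] at this
    exact this.congr fun m => by simp only [Function.comp_apply, htγ]; ring
  have hABOS := tendsto_sq_div_rpow_iff hC hC0 hγ.ne' (fun m => (hωGW m).le)
    (fun m => hv m ▸ mul_pos (hδ m) (hf0 m)) hu1 hvu1
  have hiff : Tendsto t atTop (𝓝 √C) ↔ Tendsto (fun m => δ m * (α m / (1 - α m))) atTop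
      (𝓝 (2 * √C * d √C / γ / (1 - (2 * cdf d √C - 1)))) := by
    have h1p : Tendsto (fun m => 1 - p m) atTop (𝓝 1) := by
      simpa using (tendsto_const_nhds (x := (1 : ℝ))).sub hp0
    rw [h.tendsto_iff_of_tendsto_mul_rpow_mul_one_sub_cdf hsC (mul_pos hC0 (div_pos hCd hγ)).ne'
      (fun m => mul_pos (hωGW m) (rpow_pos_of_pos (hu1 m) _)) htA hX,
      C₀_mul_div_eq_C₁_div_one_sub_C₂ hC hCd.ne' (sub_pos.1 hDC).ne]
    simpa only [mul_one] using Filter.tendsto_mul_iff_of_ne_zero h1p one_ne_zero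
  have hL : 0 < 2 * √C * d √C / γ / (1 - (2 * cdf d √C - 1)) := by
    have := h.pos _ hsC
    rw [show 1 - (2 * cdf d √C - 1) = 2 * (1 - cdf d √C) by ring]
    positivity
  refine ⟨hABOS.trans hiff, fun hlim => tendsto_div_mul_rpow_of_tendsto hC.ne' hC0 hL
    (C_mul_rpow_eq_C_B hC hγ hCd (h.pos _ hsC).ne' (sub_pos.1 hDC))
    (fun m => mul_pos (hδ m) (hr m)) (fun m => (div_pos (hf0 m) (hr m)).le) (fun m => ?_) hlim
    (hABOS.2 (hiff.2 hlim))⟩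
  rw [hv, mul_assoc, mul_div_cancel₀ _ (hr m).ne']

/-- Proposition 4 (Genovese–Wasserman procedure): under the asymptotic framework with
`p_m → 0` and `limsup α_m < 1`, the Genovese–Wasserman threshold `ω_{GW,m}` solving
`(1 - D ω) / ((1 - p_m) * (1 - D ω) + p_m * (1 - D (ω * (1 + u_m) ^ (-1/2)))) = α_m`
is ABOS if and only if `δ_m * r_{α_m} → C₁ / (1 - C₂)`; and in that case
`ω_{GW,m} ^ 2 / (C_B * (f_m / r_{α_m}) ^ (2/γ)) → 1`. -/
theorem GW_procedure_ABOS (d : ℝ → ℝ) (γ Cd : ℝ) (h : IsMPT d γ Cd)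
    (heven : ∀ x, d (-x) = d x) (hcont : ContinuousOn d (Set.Ioi 0))
    (C : ℝ) (hC : 0 < C)
    (p : ℕ → ℝ) (hp : ∀ m, p m ∈ Set.Ioo (0 : ℝ) 1) (hp0 : Tendsto p atTop (nhds 0))
    (u : ℕ → ℝ) (hu : ∀ m, 0 < u m) (hu' : Tendsto u atTop atTop)
    (δ : ℕ → ℝ) (hδ : ∀ m, 0 < δ m)
    (f v : ℕ → ℝ) (hf : ∀ m, f m = (1 - p m) / p m) (hv : ∀ m, v m = δ m * f m)
    (hvu : Tendsto (fun m => v m * u m ^ (-(γ / 2))) atTop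
      (nhds (C ^ ((γ + 1) / 2) * d (Real.sqrt C) / Cd)))
    (α : ℕ → ℝ) (hα : ∀ m, α m ∈ Set.Ioo (0 : ℝ) 1) (hαsup : limsup α atTop < 1)
    (ωGW : ℕ → ℝ) (hωGW : ∀ m, 0 < ωGW m)
    (hωGWeq : ∀ m, (1 - cdf d (ωGW m)) /
        ((1 - p m) * (1 - cdf d (ωGW m))
          + p m * (1 - cdf d (ωGW m * (1 + u m) ^ (-(1 : ℝ) / 2))))
      = α m) :
    (Tendsto
      (fun m => ωGW m ^ 2 / (C * (v m / (C ^ ((γ + 1) / 2) * d (Real.sqrt C) / Cd)) ^ (2 / γ)))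
      atTop (nhds 1) ↔
    Tendsto (fun m => δ m * (α m / (1 - α m))) atTop
      (nhds ((2 * Real.sqrt C * d (Real.sqrt C) / γ)
        / (1 - (2 * cdf d (Real.sqrt C) - 1))))) ∧
    (Tendsto (fun m => δ m * (α m / (1 - α m))) atTop
      (nhds ((2 * Real.sqrt C * d (Real.sqrt C) / γ)
        / (1 - (2 * cdf d (Real.sqrt C) - 1)))) →
      Tendsto
        (fun m => ωGW m ^ 2 /
          (((Cd / γ) / (1 - cdf d (Real.sqrt C))) ^ (2 / γ)
            * (f m / (α m / (1 - α m))) ^ (2 / γ)))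
        atTop (nhds 1)) :=
  GW_procedure_ABOS_general d γ Cd h C hC p hp hp0 u hu hu' δ hδ f v hf hv hvu α hα hαsup ωGW hωGW
    hωGWeq
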